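/- Define f : ℕ → ℝ by f(0) = f(1) = 1 and f(k) = f(k−1) − (1/16)·f(k−2) for k ≥ 2. Let Γ > 0 and let Δα, β : ℕ → ℝ be nonnegative sequences such that for every k ≥ 0: Δα(k) + (1/2)·β(k) ≤ 2^{−k}·f(k) − 2^{−k−1}·f(k+1) and ∑_{ℓ=0}^{k−1} Δα(ℓ) + β(k) ≥ Γ. Then for every ε > 0 there exists K such that ∑_{ℓ=0}^{K−1} Δα(ℓ) ≥ Γ − ε; in particular, if Δα is summable then ∑_{ℓ=0}^{∞} Δα(ℓ) ≥ Γ. -/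
import Mathlib


/-- `f 0 = f 1 = 1` and `f k = f (k-1) - (1/16) f (k-2)` for `k ≥ 2`. -/
noncomputable def f : ℕ → ℝ
  | 0 => 1
  | 1 => 1
  | (k + 2) => f (k + 1) - (1 / 16) * f k

lemma f_pos_aux : ∀ k, 0 < f k ∧ f k ≤ 4 * f (k + 1) := by
  intro k
  induction k with
  | zero => constructor <;> simp [f] <;> norm_num
  | succ n ih =>
    obtain ⟨h1, h2⟩ := ih
    have hpos : 0 < f (n + 1) := by linarith
    refine ⟨hpos, ?_⟩
    have : f (n + 2) = f (n + 1) - (1 / 16) * f n := rfl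
    rw [this]; linarith

lemma f_pos (k : ℕ) : 0 < f k := (f_pos_aux k).1

lemma f_le_one : ∀ k, f k ≤ 1 := by
  intro k
  induction k with
  | zero => simp [f]
  | succ n ih =>
    have : f (n + 1) ≤ f n := by
      match n with
      | 0 => simp [f]
      | m + 1 =>
        have h : f (m + 2) = f (m + 1) - (1 / 16) * f m := rfl
        have := f_pos m
        rw [h]; linarith
    linarith

/-- The gain-splitting constraint forces `β k → 0`, so approximate dual
feasibility gives `∑_{ℓ<K} Δα ℓ ≥ Γ - ε` for some `K`; in particular, if `Δα`
is summable then its total sum is at least `Γ`. -/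
theorem stmt_11 (Γ : ℝ) (hΓ : 0 < Γ) (Δα β : ℕ → ℝ)
    (hαnn : ∀ k, 0 ≤ Δα k) (hβnn : ∀ k, 0 ≤ β k)
    (hgain : ∀ k : ℕ,
      Δα k + (1 / 2) * β k ≤ (1 / 2 : ℝ) ^ k * f k - (1 / 2 : ℝ) ^ (k + 1) * f (k + 1))
    (hfeas : ∀ k : ℕ, Γ ≤ (∑ ℓ ∈ Finset.range k, Δα ℓ) + β k) :
    (∀ ε : ℝ, 0 < ε → ∃ K : ℕ, Γ - ε ≤ ∑ ℓ ∈ Finset.range K, Δα ℓ) ∧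
    (Summable Δα → Γ ≤ ∑' ℓ : ℕ, Δα ℓ) := by
  have hβle : ∀ k : ℕ, β k ≤ 2 * (1 / 2 : ℝ) ^ k := by
    intro k
    have h1 := hgain k
    have h2 := hαnn k
    have h3 : (0:ℝ) < (1 / 2 : ℝ) ^ (k + 1) * f (k + 1) :=
      mul_pos (by positivity) (f_pos _)
    have h4 : (1 / 2 : ℝ) ^ k * f k ≤ (1 / 2 : ℝ) ^ k := by
      have := f_le_one k
      nlinarith [pow_pos (by norm_num : (0:ℝ) < 1/2) k]
    linarith
  have key : ∀ ε : ℝ, 0 < ε → ∃ K : ℕ, Γ - ε ≤ ∑ ℓ ∈ Finset.range K, Δα ℓ := by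
    intro ε hε
    obtain ⟨K, hK⟩ := exists_pow_lt_of_lt_one (by positivity : (0:ℝ) < ε / 2)
      (by norm_num : (1/2 : ℝ) < 1)
    refine ⟨K, ?_⟩
    have hβ : β K ≤ ε := by
      have := hβle K
      linarith
    have := hfeas K
    linarith
  refine ⟨key, fun hs => ?_⟩
  by_contra h
  push_neg at h
  obtain ⟨K, hK⟩ := key ((Γ - ∑' ℓ, Δα ℓ) / 2) (by linarith)
  have hle : ∑ ℓ ∈ Finset.range K, Δα ℓ ≤ ∑' ℓ, Δα ℓ :=
    Summable.sum_le_tsum _ (fun i _ => hαnn i) hs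
  linarith
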